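/- The intersection of the subinjectivity domains of all pure-injective left R-modules equals the class of absolutely pure (fp-injective) left R-modules. -/

import Mathlib

universe u

open LinearMap MulOpposite

/-! Character module -/

/-- The character group `M⁺ = Hom_ℤ(M, ℚ/ℤ)`. -/
abbrev CharMod (M : Type u) [AddCommGroup M] : Type u := M →+ AddCircle (1 : ℚ)

/-- If `M` is a left `S`-module, then `M⁺` is a right `S`-module via `(f • r) m = f (r • m)`. -/
instance CharMod.moduleRight (S : Type u) [Ring S] (M : Type u) [AddCommGroup M]
    [Module S M] : Module Sᵐᵒᵖ (CharMod M) where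
  smul r f := f.comp (DistribMulAction.toAddMonoidHom M (unop r))
  one_smul f := by
    apply AddMonoidHom.ext; intro m
    show f ((unop (1 : Sᵐᵒᵖ)) • m) = f m
    simp
  mul_smul r s f := by
    apply AddMonoidHom.ext; intro m
    show f ((unop (r * s)) • m) = f ((unop s) • ((unop r) • m))
    simp [mul_smul]
  smul_zero r := by apply AddMonoidHom.ext; intro m; rfl
  smul_add r f g := by apply AddMonoidHom.ext; intro m; rfl
  add_smul r s f := by
    apply AddMonoidHom.ext; intro m
    show f ((unop (r + s)) • m) = f ((unop r) • m) + f ((unop s) • m)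
    rw [unop_add, add_smul, map_add]
  zero_smul f := by
    apply AddMonoidHom.ext; intro m
    show f ((unop (0 : Sᵐᵒᵖ)) • m) = 0
    simp

/-- If `M` is a right `S`-module, then `M⁺` is a left `S`-module via `(r • f) m = f (m • r)`. -/
instance CharMod.moduleLeft (S : Type u) [Ring S] (M : Type u) [AddCommGroup M]
    [Module Sᵐᵒᵖ M] : Module S (CharMod M) where
  smul r f := f.comp (DistribMulAction.toAddMonoidHom M (op r))
  one_smul f := by
    apply AddMonoidHom.ext; intro m
    show f ((op (1 : S)) • m) = f m
    simp
  mul_smul r s f := by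
    apply AddMonoidHom.ext; intro m
    show f ((op (r * s)) • m) = f ((op s) • ((op r) • m))
    rw [← mul_smul, ← op_mul]
  smul_zero r := by apply AddMonoidHom.ext; intro m; rfl
  smul_add r f g := by apply AddMonoidHom.ext; intro m; rfl
  add_smul r s f := by
    apply AddMonoidHom.ext; intro m
    show f ((op (r + s)) • m) = f ((op r) • m) + f ((op s) • m)
    rw [op_add, add_smul, map_add]
  zero_smul f := by
    apply AddMonoidHom.ext; intro m
    show f ((op (0 : S)) • m) = 0
    simp

/-! Tensor product of a right module and a left module over a (possibly noncommutative) ring -/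

section Tensor

variable (S : Type u) [Ring S]

/-- The bilinearity relations defining `M ⊗_S N` as a quotient of `M ⊗_ℤ N`. -/
def tensorRel (M N : Type u) [AddCommGroup M] [Module Sᵐᵒᵖ M] [AddCommGroup N] [Module S N] :
    Submodule ℤ (TensorProduct ℤ M N) :=
  Submodule.span ℤ {x | ∃ (m : M) (r : S) (n : N),
    x = (op r • m) ⊗ₜ[ℤ] n - m ⊗ₜ[ℤ] (r • n)}

/-- `M ⊗_S N` for a right `S`-module `M` and a left `S`-module `N`. -/
def RTensor (M N : Type u) [AddCommGroup M] [Module Sᵐᵒᵖ M] [AddCommGroup N] [Module S N] :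
    Type u := TensorProduct ℤ M N ⧸ tensorRel S M N

noncomputable instance (M N : Type u) [AddCommGroup M] [Module Sᵐᵒᵖ M] [AddCommGroup N] [Module S N] :
    AddCommGroup (RTensor S M N) :=
  inferInstanceAs (AddCommGroup (TensorProduct ℤ M N ⧸ tensorRel S M N))

/-- Functoriality of `M ⊗_S -` in the left-module variable. -/
noncomputable def rTensorMap (M : Type u) [AddCommGroup M] [Module Sᵐᵒᵖ M] {N B : Type u}
    [AddCommGroup N] [Module S N] [AddCommGroup B] [Module S B] (g : N →ₗ[S] B) :
    RTensor S M N →ₗ[ℤ] RTensor S M B :=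
  Submodule.mapQ _ _ (TensorProduct.map LinearMap.id g.toAddMonoidHom.toIntLinearMap)
    (by
      rw [tensorRel, Submodule.span_le]
      rintro x ⟨m, r, n, rfl⟩
      exact Submodule.subset_span ⟨m, r, g n, by
        erw [map_sub, TensorProduct.map_tmul, TensorProduct.map_tmul]
        simp only [LinearMap.id_apply, AddMonoidHom.coe_toIntLinearMap,
          LinearMap.toAddMonoidHom_coe, map_smul]⟩)

/-- Functoriality of `- ⊗_S N` in the right-module variable. -/
noncomputable def lTensorMap {M B : Type u} [AddCommGroup M] [Module Sᵐᵒᵖ M] [AddCommGroup B]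
    [Module Sᵐᵒᵖ B] (h : M →ₗ[Sᵐᵒᵖ] B) (N : Type u) [AddCommGroup N] [Module S N] :
    RTensor S M N →ₗ[ℤ] RTensor S B N :=
  Submodule.mapQ _ _ (TensorProduct.map h.toAddMonoidHom.toIntLinearMap LinearMap.id)
    (by
      rw [tensorRel, Submodule.span_le]
      rintro x ⟨m, r, n, rfl⟩
      exact Submodule.subset_span ⟨h m, r, n, by
        erw [map_sub, TensorProduct.map_tmul, TensorProduct.map_tmul]
        simp only [LinearMap.id_apply, AddMonoidHom.coe_toIntLinearMap,
          LinearMap.toAddMonoidHom_coe, map_smul]⟩)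

end Tensor

/-! Basic relative homological notions -/

section Defs

variable (S : Type u) [Ring S]

/-- `M` is `N`-subinjective: every map `N → M` extends along every embedding of `N`. -/
def Subinjective (N M : Type u) [AddCommGroup N] [Module S N] [AddCommGroup M]
    [Module S M] : Prop :=
  ∀ (K : Type u) [AddCommGroup K] [Module S K] (i : N →ₗ[S] K), Function.Injective i →
    ∀ f : N →ₗ[S] M, ∃ h : K →ₗ[S] M, h ∘ₗ i = f

/-- `M` is an injective module. -/
def InjMod (M : Type u) [AddCommGroup M] [Module S M] : Prop :=
  ∀ (N : Type u) [AddCommGroup N] [Module S N], Subinjective S N M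

/-- `M` is `N`-subprojective. -/
def Subprojective (M N : Type u) [AddCommGroup M] [Module S M] [AddCommGroup N]
    [Module S N] : Prop :=
  ∀ (B : Type u) [AddCommGroup B] [Module S B] (g : B →ₗ[S] N), Function.Surjective g →
    ∀ f : M →ₗ[S] N, ∃ h : M →ₗ[S] B, g ∘ₗ h = f

/-- A monomorphism of left `S`-modules is pure if it stays injective after
tensoring with any right `S`-module. -/
def IsPureMono {A B : Type u} [AddCommGroup A] [Module S A] [AddCommGroup B] [Module S B]
    (i : A →ₗ[S] B) : Prop :=
  Function.Injective i ∧
    ∀ (M : Type u) [AddCommGroup M] [Module Sᵐᵒᵖ M], Function.Injective (rTensorMap S M i)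

/-- `N` is absolutely pure (fp-injective): every embedding of `N` is pure. -/
def AbsPure (N : Type u) [AddCommGroup N] [Module S N] : Prop :=
  ∀ (K : Type u) [AddCommGroup K] [Module S K] (i : N →ₗ[S] K), Function.Injective i →
    IsPureMono S i

/-- `N` is absolutely `M`-pure, for a right module `M`. -/
def AbsMPure (M : Type u) [AddCommGroup M] [Module Sᵐᵒᵖ M] (N : Type u) [AddCommGroup N]
    [Module S N] : Prop :=
  ∀ (B : Type u) [AddCommGroup B] [Module S B] (i : N →ₗ[S] B), Function.Injective i →
    Function.Injective (rTensorMap S M i)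

/-- `M` is pure-injective: maps into `M` extend along pure monomorphisms. -/
def PureInjective (M : Type u) [AddCommGroup M] [Module S M] : Prop :=
  ∀ (A B : Type u) [AddCommGroup A] [Module S A] [AddCommGroup B] [Module S B]
    (i : A →ₗ[S] B), IsPureMono S i → ∀ f : A →ₗ[S] M, ∃ h : B →ₗ[S] M, h ∘ₗ i = f

/-- `M` is indigent: its subinjectivity domain is exactly the injective modules. -/
def Indigent (M : Type u) [AddCommGroup M] [Module S M] : Prop :=
  ∀ (N : Type u) [AddCommGroup N] [Module S N], Subinjective S N M ↔ InjMod S N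

/-- `M` is pi-indigent: `M` is pure-injective and its subinjectivity domain is exactly
the absolutely pure modules. -/
def PiIndigent (M : Type u) [AddCommGroup M] [Module S M] : Prop :=
  PureInjective S M ∧
    ∀ (N : Type u) [AddCommGroup N] [Module S N], Subinjective S N M ↔ AbsPure S N

/-- Flatness via the equational criterion. -/
def FlatMod (M : Type u) [AddCommGroup M] [Module S M] : Prop :=
  ∀ (n : ℕ) (r : Fin n → S) (x : Fin n → M), (∑ i, r i • x i) = 0 →
    ∃ (m : ℕ) (a : Fin n → Fin m → S) (y : Fin m → M),
      (∀ i, x i = ∑ j, a i j • y j) ∧ ∀ j, (∑ i, r i * a i j) = 0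

/-- Finitely presented module. -/
def FPMod (M : Type u) [AddCommGroup M] [Module S M] : Prop :=
  ∃ (n : ℕ) (K : Submodule S (Fin n → S)), K.FG ∧
    Nonempty ((((Fin n → S)) ⧸ K) ≃ₗ[S] M)

/-- `Ext¹_S(M, N) = 0`, expressed by the splitting of every extension of `N` by `M`. -/
def ExtVanish (M N : Type u) [AddCommGroup M] [Module S M] [AddCommGroup N] [Module S N] :
    Prop :=
  ∀ (B : Type u) [AddCommGroup B] [Module S B] (i : N →ₗ[S] B) (p : B →ₗ[S] M),
    Function.Injective i → Function.Surjective p → LinearMap.range i = LinearMap.ker p →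
      ∃ s : M →ₗ[S] B, p ∘ₗ s = LinearMap.id

/-- `Tor₁^S(N, T) = 0` for a right module `N` and a left module `T`. -/
def TorVanish (N : Type u) [AddCommGroup N] [Module Sᵐᵒᵖ N] (T : Type u) [AddCommGroup T]
    [Module S T] : Prop :=
  ∀ (P K : Type u) [AddCommGroup P] [Module Sᵐᵒᵖ P] [AddCommGroup K] [Module Sᵐᵒᵖ K]
    (i : K →ₗ[Sᵐᵒᵖ] P) (p : P →ₗ[Sᵐᵒᵖ] N), Module.Projective Sᵐᵒᵖ P →
      Function.Injective i → Function.Surjective p →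
        LinearMap.range i = LinearMap.ker p → Function.Injective (lTensorMap S i T)

/-- `M` is a Whitehead test module for injectivity (i-test). -/
def ITest (M : Type u) [AddCommGroup M] [Module S M] : Prop :=
  ∀ (N : Type u) [AddCommGroup N] [Module S N], ExtVanish S M N → InjMod S N

/-- `S` is (left) n-saturated: `S` is not semisimple and every finitely generated
non-projective module is i-test. -/
def NSaturated : Prop :=
  ¬ IsSemisimpleRing S ∧ ∀ (M : Type u) [AddCommGroup M] [Module S M],
    Module.Finite S M → ¬ Module.Projective S M → ITest S M

/-- A submodule is essential if it intersects every nonzero submodule nontrivially. -/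
def EssentialIn {M : Type u} [AddCommGroup M] [Module S M] (A : Submodule S M) : Prop :=
  ∀ B : Submodule S M, B ≠ ⊥ → A ⊓ B ≠ ⊥

/-- `M` is a singular module: every element is annihilated by an essential left ideal. -/
def SingularMod (M : Type u) [AddCommGroup M] [Module S M] : Prop :=
  ∀ x : M, EssentialIn S (LinearMap.ker (LinearMap.toSpanSingleton S M x))

/-- `S` is (left) nonsingular: `Z(S) = 0`. -/
def NonsingularRing : Prop :=
  ∀ r : S, EssentialIn S (LinearMap.ker (LinearMap.toSpanSingleton S S r)) → r = 0

/-- The socle of a module: the supremum of its simple submodules. -/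
def socle (M : Type u) [AddCommGroup M] [Module S M] : Submodule S M :=
  sSup {N : Submodule S M | IsAtom N}

/-- von Neumann regular ring. -/
def IsVNR : Prop := ∀ a : S, ∃ r : S, a * r * a = a

/-- (left) V-ring: every simple module is injective. -/
def VRing : Prop :=
  ∀ (M : Type u) [AddCommGroup M] [Module S M], IsSimpleModule S M → InjMod S M

/-- (left) hereditary: every left ideal is projective. -/
def HereditaryRing : Prop := ∀ I : Submodule S S, Module.Projective S I

/-- (left) semihereditary: every finitely generated left ideal is projective. -/
def SemihereditaryRing : Prop := ∀ I : Submodule S S, I.FG → Module.Projective S I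

/-- (left) SI-ring: every singular module is injective. -/
def SIRing : Prop :=
  ∀ (M : Type u) [AddCommGroup M] [Module S M], SingularMod S M → InjMod S M

/-- quasi-Frobenius ring: two-sided Noetherian and self-injective. -/
def QFRing : Prop :=
  IsNoetherianRing S ∧ IsNoetherianRing Sᵐᵒᵖ ∧ InjMod S S ∧ InjMod Sᵐᵒᵖ S

/-- A module is uniserial if its submodules are totally ordered. -/
def Uniserial (M : Type u) [AddCommGroup M] [Module S M] : Prop :=
  ∀ A B : Submodule S M, A ≤ B ∨ B ≤ A

/-- (left) serial ring: `S` is a finite direct sum of uniserial left ideals. -/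
def SerialRing : Prop :=
  ∃ (n : ℕ) (f : Fin n → Submodule S S), (∀ i, Uniserial S (f i)) ∧
    iSupIndep f ∧ iSup f = ⊤

/-- (left) coherent: every finitely generated left ideal is finitely presented. -/
def CoherentRing : Prop := ∀ I : Submodule S S, I.FG → FPMod S I

/-- Indecomposable ring: no nontrivial central idempotents. -/
def IndecompRing : Prop :=
  Nontrivial S ∧ ∀ e : S, e * e = e → (∀ r : S, e * r = r * e) → e = 0 ∨ e = 1

end Defs

/-! The double character module `N⁺⁺` is pure-injective (by the Hom–tensor adjunction, since
`ℚ/ℤ` is an injective abelian group), and the evaluation map `N → N⁺⁺` is a pure embedding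
(every character of `M ⊗ N` factors through `M ⊗ N⁺⁺`). So if `N` lies in the subinjectivity
domain of every pure-injective module, then for any embedding `i : N → K` the evaluation map
factors as `e ∘ i`, and purity of `e ∘ i` forces purity of `i`. Conversely, if `N` is absolutely
pure, every embedding of `N` is pure, so maps into a pure-injective module extend along it. -/

namespace RTensor

variable {S : Type u} [Ring S] {M N : Type u} [AddCommGroup M] [Module Sᵐᵒᵖ M]
  [AddCommGroup N] [Module S N] {P : Type*} [AddCommGroup P]

variable (S M N) in
noncomputable def mk : M →ₗ[ℤ] N →ₗ[ℤ] RTensor S M N :=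
  (TensorProduct.mk ℤ M N).compr₂ (tensorRel S M N).mkQ

lemma mk_op_smul (m : M) (r : S) (n : N) : mk S M N (op r • m) n = mk S M N m (r • n) :=
  (Submodule.Quotient.eq _).2 (Submodule.subset_span ⟨m, r, n, rfl⟩)

@[elab_as_elim]
lemma induction_on {motive : RTensor S M N → Prop} (x : RTensor S M N) (zero : motive 0)
    (mk : ∀ m n, motive (mk S M N m n)) (add : ∀ x y, motive x → motive y → motive (x + y)) :
    motive x := by
  obtain ⟨y, rfl⟩ := Submodule.Quotient.mk_surjective _ x
  induction y using TensorProduct.induction_on with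
  | zero => exact zero
  | tmul m n => exact mk m n
  | add y z hy hz => exact add _ _ hy hz

noncomputable def lift (b : M →+ N →+ P) (hb : ∀ m (r : S) n, b (op r • m) n = b m (r • n)) :
    RTensor S M N →+ P :=
  ((tensorRel S M N).liftQ (TensorProduct.lift (LinearMap.mk₂ ℤ (fun m n => b m n)
    (by simp) (by simp) (by simp) (by simp))) (by
      rw [tensorRel, Submodule.span_le]
      rintro _ ⟨m, r, n, rfl⟩
      exact LinearMap.sub_mem_ker_iff.2 (hb m r n))).toAddMonoidHom

@[simp]
lemma lift_mk (b : M →+ N →+ P) (hb : ∀ m (r : S) n, b (op r • m) n = b m (r • n))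
    (m : M) (n : N) : lift b hb (mk S M N m n) = b m n :=
  rfl

end RTensor

section Purity

variable {S : Type u} [Ring S]

@[simp]
lemma rTensorMap_mk (M : Type u) [AddCommGroup M] [Module Sᵐᵒᵖ M] {N B : Type u}
    [AddCommGroup N] [Module S N] [AddCommGroup B] [Module S B] (g : N →ₗ[S] B) (m : M) (n : N) :
    rTensorMap S M g (RTensor.mk S M N m n) = RTensor.mk S M B m (g n) :=
  rfl

lemma rTensorMap_comp (M : Type u) [AddCommGroup M] [Module Sᵐᵒᵖ M] {A B C : Type u}
    [AddCommGroup A] [Module S A] [AddCommGroup B] [Module S B] [AddCommGroup C] [Module S C]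
    (f : A →ₗ[S] B) (g : B →ₗ[S] C) :
    rTensorMap S M (g ∘ₗ f) = rTensorMap S M g ∘ₗ rTensorMap S M f := by
  ext x
  induction x using RTensor.induction_on with
  | zero => simp
  | mk m a => simp
  | add x y hx hy => simp [hx, hy]

lemma IsPureMono.of_comp {A B C : Type u} [AddCommGroup A] [Module S A] [AddCommGroup B]
    [Module S B] [AddCommGroup C] [Module S C] {f : A →ₗ[S] B} {g : B →ₗ[S] C}
    (h : IsPureMono S (g ∘ₗ f)) : IsPureMono S f := by
  refine ⟨Function.Injective.of_comp (f := g) h.1, fun M _ _ => ?_⟩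
  have := h.2 M
  rw [rTensorMap_comp, LinearMap.coe_comp] at this
  exact this.of_comp

lemma PureInjective.subinjective_of_absPure {M N : Type u} [AddCommGroup M] [Module S M]
    [AddCommGroup N] [Module S N] (hM : PureInjective S M) (hN : AbsPure S N) :
    Subinjective S N M :=
  fun K _ _ i hi => hM N K i (hN K i hi)

end Purity

section Character

variable {S : Type u} [Ring S]

@[simp]
lemma CharMod.smul_apply_of_left {M : Type u} [AddCommGroup M] [Module S M] (r : Sᵐᵒᵖ)
    (f : CharMod M) (m : M) : (r • f) m = f (unop r • m) :=
  rfl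

@[simp]
lemma CharMod.smul_apply_of_right {M : Type u} [AddCommGroup M] [Module Sᵐᵒᵖ M] (r : S)
    (f : CharMod M) (m : M) : (r • f) m = f (op r • m) :=
  rfl

namespace RTensor

variable {M N : Type u} [AddCommGroup M] [Module Sᵐᵒᵖ M] [AddCommGroup N] [Module S N]

/-- The two halves of the Hom–tensor adjunction
`Hom_{Sᵒᵖ}(M, N⁺) ≅ (M ⊗_S N)⁺ ≅ Hom_S(N, M⁺)`. -/
noncomputable def curryLeft (χ : CharMod (RTensor S M N)) : M →ₗ[Sᵐᵒᵖ] CharMod N where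
  toFun m := AddMonoidHom.mk' (fun n => χ (mk S M N m n)) (by simp)
  map_add' _ _ := by ext; simp
  map_smul' r m := by ext; simp [← mk_op_smul]

noncomputable def curryRight (χ : CharMod (RTensor S M N)) : N →ₗ[S] CharMod M where
  toFun n := AddMonoidHom.mk' (fun m => χ (mk S M N m n)) (by simp)
  map_add' _ _ := by ext; simp
  map_smul' r n := by ext; simp [mk_op_smul]

@[simp]
lemma curryLeft_apply (χ : CharMod (RTensor S M N)) (m : M) (n : N) :
    curryLeft χ m n = χ (mk S M N m n) :=
  rfl

end RTensor

variable (S) in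
noncomputable def evChar (N : Type u) [AddCommGroup N] [Module S N] :
    N →ₗ[S] CharMod (CharMod N) :=
  { AddMonoidHom.eval with map_smul' := fun _ _ => rfl }

@[simp]
lemma evChar_apply {N : Type u} [AddCommGroup N] [Module S N] (n : N) (φ : CharMod N) :
    evChar S N n φ = φ n :=
  rfl

lemma evChar_injective (N : Type u) [AddCommGroup N] [Module S N] :
    Function.Injective (evChar S N) :=
  (injective_iff_map_eq_zero _).2 fun _ hn =>
    CharacterModule.eq_zero_of_character_apply fun c => DFunLike.congr_fun hn c

lemma isPureMono_evChar (N : Type u) [AddCommGroup N] [Module S N] :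
    IsPureMono S (evChar S N) := by
  refine ⟨evChar_injective N, fun M _ _ => (injective_iff_map_eq_zero _).2 fun x hx => ?_⟩
  refine CharacterModule.eq_zero_of_character_apply fun (χ : CharMod _) => ?_
  -- `m ⊗ F ↦ F (curryLeft χ m)` pulls back to `χ` along `M ⊗ evChar`, so `χ` kills `x`.
  let b : M →+ CharMod (CharMod N) →+ AddCircle (1 : ℚ) :=
    AddMonoidHom.eval.comp (RTensor.curryLeft χ).toAddMonoidHom
  let θ := RTensor.lift (S := S) b fun m r F => by simp [b]
  have hθ : ∀ y, θ (rTensorMap S M (evChar S N) y) = χ y := by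
    intro y
    induction y using RTensor.induction_on with
    | zero => simp
    | mk m n => simp [θ, b]
    | add y z hy hz => simp [hy, hz]
  change χ x = 0
  rw [← hθ, hx, map_zero]

lemma pureInjective_charMod (C : Type u) [AddCommGroup C] [Module Sᵐᵒᵖ C] :
    PureInjective S (CharMod C) := by
  intro A B _ _ _ _ i hi f
  -- `ℚ/ℤ` is injective, so the character `c ⊗ a ↦ f a c` of `C ⊗ A` extends to `C ⊗ B`.
  obtain ⟨ψ, hψ⟩ := CharacterModule.dual_surjective_of_injective (rTensorMap S C i) (hi.2 C)
    (RTensor.lift (S := S) f.toAddMonoidHom.flip fun c r a => by simp)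
  refine ⟨RTensor.curryRight ψ, LinearMap.ext fun a => AddMonoidHom.ext fun c => ?_⟩
  exact DFunLike.congr_fun hψ (RTensor.mk S C A c a)

end Character

theorem stmt_2 {R : Type u} [Ring R] (N : Type u) [AddCommGroup N] [Module R N] :
    (∀ (M : Type u) [AddCommGroup M] [Module R M], PureInjective R M →
      Subinjective R N M) ↔ AbsPure R N := by
  refine ⟨fun h K _ _ i hi => ?_, fun hN M _ _ hM => hM.subinjective_of_absPure hN⟩
  obtain ⟨e, he⟩ := h _ (pureInjective_charMod (CharMod N)) K i hi (evChar R N)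
  have hpure : IsPureMono R (e ∘ₗ i) := he ▸ isPureMono_evChar N
  exact hpure.of_comp
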